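/- arXiv:1012.0110 — 4 statements merged into one kernel-verified Lean document; each statement's English description precedes it below -/
import Mathlib

section
/- Let M be a commutative monoid with a zero element. Then the underlying additive group of the ring (MonoidAlgebra ℤ M) ⧸ Ideal.span {Finsupp.single (0 : M) (1 : ℤ)} is isomorphic, as an additive group, to the quotient (FreeAbelianGroup M) ⧸ AddSubgroup.zmultiples (FreeAbelianGroup.of (0 : M)). (This expresses that the underlying abelian group of the monoid ring β(M) = ℤ[M]/(0) is the free abelian group α(M) on the pointed set M with the basepoint 0 identified to zero.) -/
/-!
Multiplying by the basepoint collapses `ℤ[M]` onto a single coefficient, since `m * 0 = 0`; so the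
ideal generated by `single 0 1` is just its group of integer multiples. The coefficient isomorphism
`ℤ[M] ≃+ (M →₀ ℤ) ≃+ FreeAbelianGroup M` sends `single 0 1` to `of 0`, hence descends to the
quotients.
-/

namespace MonoidAlgebra

variable {k M : Type*} [Semiring k] [MonoidWithZero M]

theorem exists_mul_single_zero_eq_single_zero (x : MonoidAlgebra k M) (r : k) :
    ∃ c : k, x * single 0 r = single 0 c := by
  induction x using induction_linear with
  | zero => exact ⟨0, by simp⟩
  | add x y hx hy =>
    obtain ⟨a, ha⟩ := hx
    obtain ⟨b, hb⟩ := hy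
    exact ⟨a + b, by rw [add_mul, ha, hb, single_add]⟩
  | single m s => exact ⟨s * r, by rw [single_mul_single, mul_zero]⟩

theorem mem_span_single_zero_one {y : MonoidAlgebra k M} :
    y ∈ Ideal.span {single (0 : M) (1 : k)} ↔ ∃ c : k, single 0 c = y := by
  rw [Ideal.mem_span_singleton']
  constructor
  · rintro ⟨x, rfl⟩
    obtain ⟨c, hc⟩ := exists_mul_single_zero_eq_single_zero x 1
    exact ⟨c, hc.symm⟩
  · rintro ⟨c, rfl⟩
    exact ⟨single 0 c, by rw [single_mul_single, mul_zero, mul_one]⟩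

theorem toAddSubgroup_span_single_zero_one :
    (Ideal.span {single (0 : M) (1 : ℤ)}).toAddSubgroup =
      AddSubgroup.zmultiples (single (0 : M) (1 : ℤ)) := by
  ext y
  simp only [Submodule.mem_toAddSubgroup, mem_span_single_zero_one, AddSubgroup.mem_zmultiples_iff,
    smul_single, smul_eq_mul, mul_one]

end MonoidAlgebra

/-- The underlying additive group of the monoid ring `β(M) = ℤ[M]/(0)` is the
free abelian group `α(M)` on the pointed set `M` with the basepoint `0`
identified with zero. -/
theorem monoidAlgebra_quotient_addEquiv_freeAbelianGroup_quotient
    (M : Type*) [CommMonoidWithZero M] :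
    Nonempty ((MonoidAlgebra ℤ M ⧸
        Ideal.span {MonoidAlgebra.single (0 : M) (1 : ℤ)}) ≃+
      (FreeAbelianGroup M ⧸ AddSubgroup.zmultiples (FreeAbelianGroup.of (0 : M)))) := by
  let e : MonoidAlgebra ℤ M ≃+ FreeAbelianGroup M :=
    MonoidAlgebra.coeffAddEquiv.trans (FreeAbelianGroup.equivFinsupp M).symm
  have he : e (MonoidAlgebra.single 0 1) = FreeAbelianGroup.of 0 := by
    simp [e]
  refine ⟨QuotientAddGroup.congr _ _ e ?_⟩
  rw [MonoidAlgebra.toAddSubgroup_span_single_zero_one, AddMonoidHom.map_zmultiples]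
  exact congrArg _ he
end

section
/- Let p be a prime number and let A be an additive commutative group such that for every natural number n coprime to p, the map a ↦ n • a is a bijection of A. Then the additive group (ℚ →+ A) of additive homomorphisms from ℚ to A is isomorphic, as an additive group, to the inverse limit of the tower ⋯ → A → A → A with all maps given by multiplication by p, i.e. to the group {s : ℕ → A // ∀ n, p • s (n+1) = s n} with pointwise addition; the isomorphism sends f to the sequence n ↦ f (1/pⁿ). -/
/-- The inverse limit of the tower `⋯ → A → A → A` of multiplication-by-`p` maps,
realized as the additive group of sequences `s : ℕ → A` with `p • s (n+1) = s n`. -/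
def pTower (p : ℕ) (A : Type*) [AddCommGroup A] : AddSubgroup (ℕ → A) where
  carrier := {s : ℕ → A | ∀ n, p • s (n + 1) = s n}
  zero_mem' := by intro n; simp
  add_mem' := by
    intro a b ha hb n
    simp only [Pi.add_apply, smul_add, ha n, hb n]
  neg_mem' := by
    intro a ha n
    simp only [Pi.neg_apply, smul_neg, ha n]

/-!
A homomorphism `f : ℚ → A` is determined by the values `f (1/pⁿ)`, since every rational
can be written `q = a / (pⁿ m)` with `m` coprime to `p`, and then `f q = a • (f (1/pⁿ)) / m`,
division by `m` being possible in `A`. Conversely, for a compatible sequence `s` the same formula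
`a / (pⁿ m) ↦ a • s n / m` is independent of the representation (pass to the common refinement
`pⁿ⁺ⁿ' m m'`), hence defines a homomorphism `ℚ → A` that sends `1/pⁿ` to `s n`.
-/

section DivBy

variable {A : Type*} [AddCommGroup A] {m : ℕ}

noncomputable def divBy (m : ℕ) (x : A) : A := Function.invFun (fun a : A => m • a) x

variable (h : Function.Bijective (fun a : A => m • a))
include h

theorem nsmul_divBy (x : A) : m • divBy m x = x :=
  Function.rightInverse_invFun h.2 x

theorem divBy_nsmul (x : A) : divBy m (m • x) = x :=
  Function.leftInverse_invFun h.1 x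

theorem divBy_eq_of_nsmul_eq {x y : A} (hxy : m • y = x) : divBy m x = y := by
  rw [← hxy, divBy_nsmul h]

theorem divBy_zsmul (a : ℤ) (x : A) : divBy m (a • x) = a • divBy m x :=
  divBy_eq_of_nsmul_eq h (by rw [smul_comm, nsmul_divBy h])

theorem divBy_eq_nsmul_divBy_mul {l : ℕ} (hl : Function.Bijective (fun a : A => (m * l) • a))
    (x : A) : divBy m x = l • divBy (m * l) x :=
  divBy_eq_of_nsmul_eq h (by rw [← mul_smul, nsmul_divBy hl])

end DivBy

theorem divBy_one {A : Type*} [AddCommGroup A] (x : A) : divBy 1 x = x :=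
  divBy_eq_of_nsmul_eq (by simp only [one_smul]; exact Function.bijective_id) (one_smul ℕ x)

theorem Rat.mul_ordProj_mul_ordCompl_den (p : ℕ) (q : ℚ) :
    q * ((ordProj[p] q.den : ℕ) * (ordCompl[p] q.den : ℕ)) = q.num := by
  rw [← Nat.cast_mul, Nat.ordProj_mul_ordCompl_eq_self, Rat.mul_den_eq_num]

theorem Rat.exists_coprime_mul_pow_mul_eq_num {p : ℕ} (hp : p.Prime) (q : ℚ) :
    ∃ n m : ℕ, m.Coprime p ∧ q * (p ^ n * m) = q.num :=
  ⟨_, _, (Nat.coprime_ordCompl hp q.den_nz).symm, by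
    exact_mod_cast q.mul_ordProj_mul_ordCompl_den p⟩

theorem AddMonoidHom.nsmul_apply_eq_zsmul_apply_inv_pow {A : Type*} [AddCommGroup A] {p : ℕ}
    (hp : p ≠ 0) (f : ℚ →+ A) {q : ℚ} {a : ℤ} {n m : ℕ} (hq : q * (p ^ n * m) = a) :
    m • f q = a • f (1 / (p : ℚ) ^ n) := by
  rw [← map_nsmul, ← map_zsmul, nsmul_eq_mul, zsmul_eq_mul, ← hq]
  congr 1
  field_simp

namespace pTower

variable {A : Type*} [AddCommGroup A] {p : ℕ}

theorem eq_pow_nsmul {s : ℕ → A} (hs : ∀ n, p • s (n + 1) = s n) (n k : ℕ) :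
    s n = p ^ k • s (n + k) := by
  induction k with
  | zero => simp
  | succ k ih => rw [ih, ← hs (n + k), ← mul_smul, ← pow_succ, add_assoc]

def ofHom (hp : p ≠ 0) : (ℚ →+ A) →+ pTower p A where
  toFun f := ⟨fun n => f (1 / (p : ℚ) ^ n), fun n => by
    have hp₀ : (p : ℚ) ≠ 0 := Nat.cast_ne_zero.2 hp
    rw [← map_nsmul, nsmul_eq_mul]
    congr 1
    field_simp
    ring⟩
  map_zero' := rfl
  map_add' _ _ := rfl

variable (hA : ∀ n : ℕ, Nat.Coprime n p → Function.Bijective (fun a : A => n • a))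
include hA

theorem zsmul_divBy_eq_zsmul_divBy_mul {s : ℕ → A} (hs : ∀ n, p • s (n + 1) = s n)
    (a : ℤ) (n n' : ℕ) {m m' : ℕ} (hm : m.Coprime p) (hm' : m'.Coprime p) :
    a • divBy m (s n) = (a * p ^ n' * m') • divBy (m * m') (s (n + n')) := by
  rw [eq_pow_nsmul hs n n', ← natCast_zsmul, divBy_zsmul (hA m hm),
    divBy_eq_nsmul_divBy_mul (hA m hm) (hA _ (Nat.Coprime.mul_left hm hm')), ← natCast_zsmul,
    smul_smul, smul_smul]
  push_cast
  rfl

theorem zsmul_divBy_eq {s : ℕ → A} (hs : ∀ n, p • s (n + 1) = s n) {a a' : ℤ} {n n' m m' : ℕ}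
    (hm : m.Coprime p) (hm' : m'.Coprime p) (h : a * p ^ n' * m' = a' * p ^ n * m) :
    a • divBy m (s n) = a' • divBy m' (s n') := by
  rw [zsmul_divBy_eq_zsmul_divBy_mul hA hs a n n' hm hm',
    zsmul_divBy_eq_zsmul_divBy_mul hA hs a' n' n hm' hm, h, mul_comm m', add_comm n']

variable (p) in
noncomputable def liftFun (s : ℕ → A) (q : ℚ) : A :=
  q.num • divBy (ordCompl[p] q.den) (s (q.den.factorization p))

theorem liftFun_eq (hp : p.Prime) {s : ℕ → A} (hs : ∀ n, p • s (n + 1) = s n) {q : ℚ} {a : ℤ}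
    {n m : ℕ} (hm : m.Coprime p) (hq : q * (p ^ n * m) = a) :
    liftFun p s q = a • divBy m (s n) := by
  refine zsmul_divBy_eq hA hs (Nat.coprime_ordCompl hp q.den_nz).symm hm ?_
  have hden := q.mul_ordProj_mul_ordCompl_den p
  generalize ordCompl[p] q.den = m₀ at hden ⊢
  generalize q.den.factorization p = v at hden ⊢
  exact_mod_cast show (q.num : ℚ) * p ^ n * m = a * p ^ v * m₀ by
    rw [← hq, ← hden]; push_cast; ring

theorem liftFun_add (hp : p.Prime) {s : ℕ → A} (hs : ∀ n, p • s (n + 1) = s n) (q r : ℚ) :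
    liftFun p s (q + r) = liftFun p s q + liftFun p s r := by
  obtain ⟨v, m, hm, hq⟩ := q.exists_coprime_mul_pow_mul_eq_num hp
  obtain ⟨w, m', hm', hr⟩ := r.exists_coprime_mul_pow_mul_eq_num hp
  have hq' : q * (p ^ (v + w) * (m * m' : ℕ)) = (q.num * p ^ w * m' : ℤ) := by
    push_cast; rw [← hq]; ring
  have hr' : r * (p ^ (v + w) * (m * m' : ℕ)) = (r.num * p ^ v * m : ℤ) := by
    push_cast; rw [← hr]; ring
  have hqr := congrArg₂ (· + ·) hq' hr'
  simp only [← add_mul, ← Int.cast_add] at hqr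
  rw [liftFun_eq hA hp hs (Nat.Coprime.mul_left hm hm') hq',
    liftFun_eq hA hp hs (Nat.Coprime.mul_left hm hm') hr',
    liftFun_eq hA hp hs (Nat.Coprime.mul_left hm hm') hqr, add_smul]

variable (hp : p.Prime)
include hp

noncomputable def lift (s : pTower p A) : ℚ →+ A :=
  AddMonoidHom.mk' (liftFun p s) (liftFun_add hA hp s.2)

theorem lift_apply_inv_pow (s : pTower p A) (n : ℕ) :
    lift hA hp s (1 / (p : ℚ) ^ n) = (s : ℕ → A) n := by
  have hp₀ : (p : ℚ) ≠ 0 := Nat.cast_ne_zero.2 hp.ne_zero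
  rw [lift, AddMonoidHom.mk'_apply,
    liftFun_eq hA hp s.2 (Nat.coprime_one_left p) (a := 1) (n := n) (by push_cast; field_simp),
    one_smul, divBy_one]

theorem lift_ofHom (f : ℚ →+ A) : lift hA hp (ofHom hp.ne_zero f) = f := by
  ext q
  obtain ⟨n, m, hm, hq⟩ := q.exists_coprime_mul_pow_mul_eq_num hp
  rw [lift, AddMonoidHom.mk'_apply, liftFun_eq hA hp (ofHom hp.ne_zero f).2 hm hq,
    ← divBy_zsmul (hA m hm)]
  exact divBy_eq_of_nsmul_eq (hA m hm) (f.nsmul_apply_eq_zsmul_apply_inv_pow hp.ne_zero hq)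

theorem ofHom_lift (s : pTower p A) : ofHom hp.ne_zero (lift hA hp s) = s :=
  Subtype.ext (funext (lift_apply_inv_pow hA hp s))

noncomputable def homRatEquiv : (ℚ →+ A) ≃+ pTower p A :=
  { ofHom hp.ne_zero with
    invFun := lift hA hp
    left_inv := lift_ofHom hA hp
    right_inv := ofHom_lift hA hp }

end pTower

/-- If `A` is uniquely `n`-divisible for every `n` coprime to `p`, then `Hom(ℚ, A)`
is the inverse limit `lim (⋯ → A →p→ A →p→ A)`, via `f ↦ (n ↦ f (1/pⁿ))`. -/
theorem homRat_addEquiv_pTower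
    (p : ℕ) (hp : p.Prime) (A : Type*) [AddCommGroup A]
    (hA : ∀ n : ℕ, Nat.Coprime n p → Function.Bijective (fun a : A => n • a)) :
    ∃ e : (ℚ →+ A) ≃+ pTower p A,
      ∀ (f : ℚ →+ A) (n : ℕ), (e f : ℕ → A) n = f (1 / (p : ℚ) ^ n) :=
  ⟨pTower.homRatEquiv hA hp, fun _ _ => rfl⟩
end

section
/- Let T be a family of additive commutative groups indexed by the prime numbers such that for every prime p, every element t of T p is annihilated by some power of p (i.e. ∃ k, p^k • t = 0; each T p is a p-primary torsion group). Let f : ℚ →+ (∀ p, T p) be an additive homomorphism to the direct product. Then f takes values in the direct sum — i.e. for every q : ℚ the set {p | f q p ≠ 0} is finite — if and only if the set {p | f 1 p ≠ 0} is finite. (Homomorphisms ℚ → ∏_p T_p landing in ⊕_p T_p are exactly those whose p-th component kills ℤ, i.e. factors through ℚ/ℤ, for all but finitely many p.) -/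
/-! Write `q = a / d`. Then `d • f q = a • f 1`, so at a prime `p ∤ d` with `f 1 p = 0`
the element `f q p` is killed both by `d` and by a power of `p`, hence vanishes. Thus the
support of `f q` lies in the support of `f 1` together with the prime divisors of `d`. -/

theorem eq_zero_of_coprime_nsmul_eq_zero {A : Type*} [AddMonoid A] {a : A} {m n : ℕ}
    (hmn : m.Coprime n) (hm : m • a = 0) (hn : n • a = 0) : a = 0 :=
  AddMonoid.addOrderOf_eq_one_iff.mp <| Nat.eq_one_of_dvd_coprimes hmn
    (addOrderOf_dvd_of_nsmul_eq_zero hm) (addOrderOf_dvd_of_nsmul_eq_zero hn)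

theorem AddMonoidHom.den_nsmul_map_rat_eq_num_zsmul {A : Type*} [AddGroup A] (g : ℚ →+ A)
    (q : ℚ) : q.den • g q = q.num • g 1 := by
  rw [← map_nsmul, ← map_zsmul, nsmul_eq_mul, zsmul_one, mul_comm, Rat.mul_den_eq_num]

theorem AddMonoidHom.map_rat_eq_zero_of_not_dvd_den {A : Type*} [AddGroup A] (g : ℚ →+ A)
    {p k : ℕ} (hp : p.Prime) {q : ℚ} (hpq : ¬ p ∣ q.den) (hk : p ^ k • g q = 0)
    (h1 : g 1 = 0) : g q = 0 := by
  have hden : q.den • g q = 0 := by rw [g.den_nsmul_map_rat_eq_num_zsmul, h1, smul_zero]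
  exact eq_zero_of_coprime_nsmul_eq_zero
    (((hp.coprime_iff_not_dvd).mpr hpq).pow_left k) hk hden

theorem Nat.Primes.finite_setOf_dvd {n : ℕ} (hn : n ≠ 0) :
    {p : Nat.Primes | (p : ℕ) ∣ n}.Finite :=
  ((Set.finite_Iic n).preimage Subtype.val_injective.injOn).subset
    fun _ hp => Nat.le_of_dvd (Nat.pos_of_ne_zero hn) hp

/-- Let `T p` be a `p`-primary torsion abelian group for each prime `p`, and let
`f : ℚ →+ ∏_p T p`. Then `f` takes values in the direct sum `⊕_p T p` (i.e. `f q`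
is finitely supported for every `q`) if and only if `f 1` is finitely supported,
i.e. the `p`-th component of `f` factors through `ℚ/ℤ` for all but finitely
many `p`. -/
theorem homRat_lands_in_directSum_iff
    (T : Nat.Primes → Type*) [∀ p, AddCommGroup (T p)]
    (hT : ∀ (p : Nat.Primes) (t : T p), ∃ k : ℕ, (p : ℕ) ^ k • t = 0)
    (f : ℚ →+ ∀ p, T p) :
    (∀ q : ℚ, {p : Nat.Primes | f q p ≠ 0}.Finite) ↔
      {p : Nat.Primes | f 1 p ≠ 0}.Finite := by
  refine ⟨fun h => h 1, fun h1 q => ?_⟩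
  refine (h1.union (Nat.Primes.finite_setOf_dvd q.den_nz)).subset fun p hp => ?_
  by_contra hout
  simp only [Set.mem_union, Set.mem_ofPred_eq, not_or, not_not] at hout
  obtain ⟨k, hk⟩ := hT p (f q p)
  exact hp <| ((Pi.evalAddMonoidHom T p).comp f).map_rat_eq_zero_of_not_dvd_den p.prop
    hout.2 hk hout.1
end

section
/- Let p be a prime number. The additive group of additive homomorphisms from ℚ to the p-primary component of ℚ/ℤ (the Prüfer p-group ℤ(p^∞)) is isomorphic, as an additive group, to the additive group of the p-adic numbers ℚ_p. -/
/-!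
Both groups are `ℚ`-vector spaces of cardinality `𝔠` (homomorphisms out of `ℚ` form a `ℚ`-vector
space through the domain), so they have the same dimension and are isomorphic. Homomorphisms
between countable groups are at most `ℵ₀ ^ ℵ₀ = 𝔠` in number, and there are at least `#ℚ_[p] = 𝔠`
of them `ℚ → ℤ(p^∞)`: `x ↦ (r ↦ {r x})` is injective, where `{·}` is the `p`-adic fractional part
`ℚ_[p] → ℚ_[p] ⧸ ℤ_[p] ≅ ℤ(p^∞)`.
-/

/-- The `p`-primary component of an abelian group: the subgroup of elements
annihilated by some power of `p`. -/
def primaryComponent (p : ℕ) (G : Type*) [AddCommGroup G] : AddSubgroup G where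
  carrier := {x : G | ∃ k : ℕ, p ^ k • x = 0}
  zero_mem' := ⟨0, by simp⟩
  add_mem' := by
    rintro a b ⟨k, hk⟩ ⟨l, hl⟩
    refine ⟨k + l, ?_⟩
    have ha : p ^ (k + l) • a = 0 := by
      rw [pow_add, mul_comm, mul_smul, hk, smul_zero]
    have hb : p ^ (k + l) • b = 0 := by
      rw [pow_add, mul_smul, hl, smul_zero]
    rw [smul_add, ha, hb, add_zero]
  neg_mem' := by
    rintro a ⟨k, hk⟩
    exact ⟨k, by rw [smul_neg, hk, neg_zero]⟩

open Cardinal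

/-- `R` acts on `V →+ T` through the domain: `(r • f) v = f (r • v)`. -/
noncomputable abbrev AddMonoidHom.domModule (R V T : Type*) [CommSemiring R] [AddCommMonoid V]
    [Module R V] [AddCommMonoid T] : Module R (V →+ T) :=
  letI : Module Rᵐᵒᵖ (V →+ T) := AddMonoidHom.instDomMulActModule
  Module.compHom (V →+ T) (RingEquiv.toOpposite R).toRingHom

universe u in
theorem nonempty_addEquiv_of_mk_eq {K V W : Type u} [Field K] [Infinite K] [AddCommGroup V]
    [Module K V] [AddCommGroup W] [Module K W] (hK : #K < #V) (h : #V = #W) :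
    Nonempty (V ≃+ W) := by
  have hrank : Module.rank K V = Module.rank K W := by
    rw [Module.Free.rank_eq_mk_of_infinite_lt K V (by simpa using hK),
      Module.Free.rank_eq_mk_of_infinite_lt K W (by simpa [← h] using hK), h]
  exact (nonempty_linearEquiv_of_rank_eq hrank).map LinearEquiv.toAddEquiv

theorem Cardinal.mk_addMonoidHom_le_continuum (A B : Type*) [AddZeroClass A] [AddZeroClass B]
    [Countable A] [Countable B] : #(A →+ B) ≤ 𝔠 := by
  calc #(A →+ B) ≤ #(A → B) := mk_le_of_injective DFunLike.coe_injective
    _ ≤ 𝔠 := by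
      rw [mk_arrow, ← aleph0_power_aleph0]
      exact (power_le_power_right (lift_le_aleph0.2 mk_le_aleph0)).trans
        (power_le_power_left aleph0_ne_zero (lift_le_aleph0.2 mk_le_aleph0))

theorem coe_mem_primaryComponent_addCircle_iff {p : ℕ} {r : ℚ} :
    (r : AddCircle (1 : ℚ)) ∈ primaryComponent p _ ↔ ∃ k : ℕ, ∃ a : ℤ, (a : ℚ) = p ^ k * r := by
  change (∃ k : ℕ, _) ↔ _
  simp only [← AddCircle.coe_nsmul, AddCircle.coe_eq_zero_iff, zsmul_one,
    nsmul_eq_mul, Nat.cast_pow]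

namespace Padic

variable {p : ℕ} [hp : Fact p.Prime]

theorem exists_rat_coe_mem_primaryComponent_norm_sub_le_one (x : ℚ_[p]) :
    ∃ r : ℚ, (r : AddCircle (1 : ℚ)) ∈ primaryComponent p _ ∧ ‖x - r‖ ≤ 1 := by
  have hp₀ : (p : ℚ_[p]) ≠ 0 := by exact_mod_cast hp.out.ne_zero
  have hpQ : (p : ℚ) ≠ 0 := by exact_mod_cast hp.out.ne_zero
  have hpR : (0 : ℝ) < p := by exact_mod_cast hp.out.pos
  -- Scale `x` into `ℤ_[p]` by `p ^ n`, then approximate it by an integer modulo `p ^ n`.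
  obtain ⟨n, hn⟩ := pow_unbounded_of_one_lt ‖x‖ (Nat.one_lt_cast.2 hp.out.one_lt)
  have hnorm : ‖(p : ℚ_[p]) ^ n‖ = ((p : ℝ) ^ n)⁻¹ := by simp
  let y : ℤ_[p] := ⟨p ^ n * x, by
    rw [norm_mul, hnorm, inv_mul_le_one₀ (pow_pos hpR n)]; exact hn.le⟩
  obtain ⟨a, ha⟩ : ∃ a : ℕ, ‖(p : ℚ_[p]) ^ n * x - a‖ ≤ ‖(p : ℚ_[p]) ^ n‖ := by
    refine ⟨y.appr n, ?_⟩
    have := (PadicInt.norm_le_pow_iff_mem_span_pow _ n).2 (y.appr_spec n)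
    rwa [PadicInt.norm_def, PadicInt.coe_sub, PadicInt.coe_natCast, ← norm_p_pow] at this
  refine ⟨a / p ^ n, coe_mem_primaryComponent_addCircle_iff.2 ⟨n, a, ?_⟩, ?_⟩
  · push_cast; field_simp
  · have hx : x - ((a / p ^ n : ℚ) : ℚ_[p]) = ((p : ℚ_[p]) ^ n * x - a) / (p : ℚ_[p]) ^ n := by
      push_cast; field_simp
    rw [hx, norm_div, div_le_one (norm_pos_iff.2 (pow_ne_zero n hp₀))]
    exact ha

theorem coe_eq_zero_of_mem_primaryComponent_of_norm_le_one {r : ℚ}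
    (hr : (r : AddCircle (1 : ℚ)) ∈ primaryComponent p _) (h : ‖(r : ℚ_[p])‖ ≤ 1) :
    (r : AddCircle (1 : ℚ)) = 0 := by
  obtain ⟨k, a, ha⟩ := coe_mem_primaryComponent_addCircle_iff.1 hr
  have hak : ‖(a : ℚ_[p])‖ ≤ (p : ℝ) ^ (-k : ℤ) := by
    rw [← norm_p_pow, ← Rat.cast_intCast, ha]
    push_cast
    rw [norm_mul]
    exact mul_le_of_le_one_right (norm_nonneg _) h
  obtain ⟨b, rfl⟩ := (norm_int_le_pow_iff_dvd a k).1 hak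
  have hpk : (p : ℚ) ^ k ≠ 0 := pow_ne_zero k (by exact_mod_cast hp.out.ne_zero)
  refine (AddCircle.coe_eq_zero_iff 1).2 ⟨b, ?_⟩
  push_cast at ha
  simpa using mul_left_cancel₀ hpk ha

noncomputable def fractRep (x : ℚ_[p]) : ℚ :=
  (exists_rat_coe_mem_primaryComponent_norm_sub_le_one x).choose

theorem coe_fractRep_mem_primaryComponent (x : ℚ_[p]) :
    (fractRep x : AddCircle (1 : ℚ)) ∈ primaryComponent p _ :=
  (exists_rat_coe_mem_primaryComponent_norm_sub_le_one x).choose_spec.1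

theorem norm_sub_fractRep_le_one (x : ℚ_[p]) : ‖x - fractRep x‖ ≤ 1 :=
  (exists_rat_coe_mem_primaryComponent_norm_sub_le_one x).choose_spec.2

variable (p) in
noncomputable def fract : ℚ_[p] →+ primaryComponent p (AddCircle (1 : ℚ)) :=
  AddMonoidHom.mk' (fun x ↦ ⟨fractRep x, coe_fractRep_mem_primaryComponent x⟩) fun x y ↦ by
    -- The additivity defect has `p`-power denominator and lies in `ℤ_[p]`, so it is an integer.
    refine Subtype.ext (sub_eq_zero.1 ?_)
    simp only [AddSubgroup.coe_add, ← AddCircle.coe_add, ← AddCircle.coe_sub]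
    refine coe_eq_zero_of_mem_primaryComponent_of_norm_le_one (p := p) ?_ ?_
    · rw [AddCircle.coe_sub, AddCircle.coe_add]
      exact sub_mem (coe_fractRep_mem_primaryComponent _)
        (add_mem (coe_fractRep_mem_primaryComponent _) (coe_fractRep_mem_primaryComponent _))
    · have h : ((fractRep (x + y) - (fractRep x + fractRep y) : ℚ) : ℚ_[p]) =
          (x - fractRep x) + (y - fractRep y) + -(x + y - fractRep (x + y)) := by
        push_cast; ring
      rw [h]
      refine (IsUltrametricDist.norm_add_le_max _ _).trans (max_le ?_ ?_)
      · exact (IsUltrametricDist.norm_add_le_max _ _).trans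
          (max_le (norm_sub_fractRep_le_one x) (norm_sub_fractRep_le_one y))
      · exact (norm_neg _).trans_le (norm_sub_fractRep_le_one _)

theorem norm_le_one_of_fract_eq_zero {x : ℚ_[p]} (h : fract p x = 0) : ‖x‖ ≤ 1 := by
  obtain ⟨n, hn⟩ := (AddCircle.coe_eq_zero_iff 1).1 (congrArg Subtype.val h)
  have hx : x = (x - fractRep x) + (n : ℚ_[p]) := by
    rw [← Rat.cast_intCast, ← hn]; simp
  rw [hx]
  exact (IsUltrametricDist.norm_add_le_max _ _).trans
    (max_le (norm_sub_fractRep_le_one x) (norm_int_le_one n))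

theorem eq_zero_of_forall_norm_ratCast_mul_le_one {x : ℚ_[p]}
    (h : ∀ r : ℚ, ‖(r : ℚ_[p]) * x‖ ≤ 1) : x = 0 := by
  by_contra hx
  obtain ⟨n, hn⟩ := pow_unbounded_of_one_lt ‖x‖⁻¹ (Nat.one_lt_cast.2 hp.out.one_lt)
  have := h ((p : ℚ) ^ n)⁻¹
  push_cast at this
  rw [norm_mul, norm_inv, norm_p_pow, zpow_neg, inv_inv, zpow_natCast] at this
  rw [inv_lt_iff_one_lt_mul₀ (norm_pos_iff.2 hx)] at hn
  exact this.not_gt hn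

variable (p) in
noncomputable def fractMul (x : ℚ_[p]) : ℚ →+ primaryComponent p (AddCircle (1 : ℚ)) :=
  (fract p).comp ((AddMonoidHom.mulRight x).comp (Rat.castHom ℚ_[p]).toAddMonoidHom)

theorem fractMul_injective : Function.Injective (fractMul p) := by
  intro x y hxy
  rw [← sub_eq_zero]
  refine eq_zero_of_forall_norm_ratCast_mul_le_one fun r ↦ norm_le_one_of_fract_eq_zero ?_
  rw [mul_sub, map_sub, sub_eq_zero]
  exact DFunLike.congr_fun hxy r

variable (p) in
theorem mk_eq_continuum : #ℚ_[p] = 𝔠 := by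
  refine le_antisymm ?_ (continuum_le_cardinal_of_nontriviallyNormedField ℚ_[p])
  calc #ℚ_[p] ≤ #(CauSeq ℚ (padicNorm p)) := mk_le_of_surjective Quotient.mk'_surjective
    _ ≤ #(ℕ → ℚ) := mk_le_of_injective fun _ _ ↦ Subtype.ext
    _ = 𝔠 := by simp

end Padic

theorem mk_homRat_primaryComponent_eq_continuum (p : ℕ) [Fact p.Prime] :
    #(ℚ →+ primaryComponent p (AddCircle (1 : ℚ))) = 𝔠 := by
  have : Countable (AddCircle (1 : ℚ)) := QuotientAddGroup.mk_surjective.countable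
  refine le_antisymm (mk_addMonoidHom_le_continuum _ _) ?_
  exact Padic.mk_eq_continuum p ▸ mk_le_of_injective Padic.fractMul_injective

/-- `Hom(ℚ, ℤ(p^∞)) ≅ ℚ_p`: the additive homomorphisms from `ℚ` to the Prüfer
`p`-group (the `p`-primary component of `ℚ/ℤ`) form a group isomorphic to the additive
group of the `p`-adic numbers. -/
theorem homRat_pruefer_addEquiv_padic (p : ℕ) [Fact p.Prime] :
    Nonempty
      ((ℚ →+
          primaryComponent p (ℚ ⧸ AddSubgroup.zmultiples (1 : ℚ))) ≃+ ℚ_[p]) := by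
  let := AddMonoidHom.domModule ℚ ℚ (primaryComponent p (AddCircle (1 : ℚ)))
  have hHom := mk_homRat_primaryComponent_eq_continuum p
  refine nonempty_addEquiv_of_mk_eq (K := ℚ) ?_ (hHom.trans (Padic.mk_eq_continuum p).symm)
  rw [hHom, Cardinal.mkRat]
  exact aleph0_lt_continuum
end
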